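/- The function u ↦ |g(u)| is monotonically decreasing on the interval (0, 1): for all real u, v with 0 < u ≤ v < 1, one has |g(v)| ≤ |g(u)|, where g(u) = −(1 − u)·cot(πu) − 1/π. -/

import Mathlib

/-!
Substituting `x = π(1 - u)` turns `g` into `g(u) = (x cot x - 1) / π`, so it suffices that
`x cot x < 1` and that `x ↦ x cot x` is strictly decreasing on `(0, π)`. Both reduce to elementary
bounds: `x cos x < sin x` (i.e. `x < tan x` below `π/2`), and, for the derivative
`(sin x cos x - x) / sin² x`, the bound `sin (2x) < 2x`.
-/

open Set

namespace Real

lemma mul_cos_lt_sin {x : ℝ} (h0 : 0 < x) (h1 : x < π) : x * cos x < sin x := by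
  rcases le_or_gt (cos x) 0 with hcos | hcos
  · nlinarith [sin_pos_of_pos_of_lt_pi h0 h1]
  · have hx : x < π / 2 := by
      by_contra! hx
      linarith [cos_nonpos_of_pi_div_two_le_of_le hx (by linarith [pi_pos])]
    have htan := lt_tan h0 hx
    rwa [tan_eq_sin_div_cos, lt_div_iff₀ hcos] at htan

lemma mul_cot_lt_one {x : ℝ} (h0 : 0 < x) (h1 : x < π) : x * cot x < 1 := by
  rw [cot_eq_cos_div_sin, ← mul_div_assoc, div_lt_one (sin_pos_of_pos_of_lt_pi h0 h1)]
  exact mul_cos_lt_sin h0 h1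

lemma cot_pi_sub (x : ℝ) : cot (π - x) = -cot x := by
  rw [cot_eq_cos_div_sin, cot_eq_cos_div_sin, cos_pi_sub, sin_pi_sub, neg_div]

lemma hasDerivAt_mul_cot {x : ℝ} (hx : sin x ≠ 0) :
    HasDerivAt (fun y => y * cot y) ((sin x * cos x - x) / sin x ^ 2) x := by
  have hquot := (hasDerivAt_cos x).fun_div (hasDerivAt_sin x) hx
  simp only [cot_eq_cos_div_sin]
  refine ((hasDerivAt_id' x).fun_mul hquot).congr_deriv ?_
  field_simp
  linear_combination -x * sin_sq_add_cos_sq x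

lemma strictAntiOn_mul_cot : StrictAntiOn (fun x => x * cot x) (Ioo 0 π) := by
  have hsin : ∀ x ∈ Ioo 0 π, sin x ≠ 0 := fun x hx => (sin_pos_of_pos_of_lt_pi hx.1 hx.2).ne'
  refine strictAntiOn_of_hasDerivWithinAt_neg (convex_Ioo 0 π)
    (fun x hx => (hasDerivAt_mul_cot (hsin x hx)).continuousAt.continuousWithinAt)
    (fun x hx => (hasDerivAt_mul_cot (hsin x (interior_subset hx))).hasDerivWithinAt)
    fun x hx => ?_
  rw [interior_Ioo] at hx
  refine div_neg_of_neg_of_pos ?_ (pow_pos (sin_pos_of_pos_of_lt_pi hx.1 hx.2) 2)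
  have := sin_lt (mul_pos two_pos hx.1)
  rw [sin_two_mul] at this
  linarith

end Real

open Real

lemma neg_one_sub_mul_cot_pi_mul_sub_one_div_pi_eq (u : ℝ) :
    -(1 - u) * cot (π * u) - 1 / π = (π * (1 - u) * cot (π * (1 - u)) - 1) / π := by
  rw [show π * u = π - π * (1 - u) by ring, cot_pi_sub]
  field_simp

theorem abs_g_antitone (u v : ℝ) (hu : 0 < u) (huv : u ≤ v) (hv : v < 1) :
    |(-(1 - v) * Real.cot (Real.pi * v) - 1 / Real.pi)| ≤
      |(-(1 - u) * Real.cot (Real.pi * u) - 1 / Real.pi)| := by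
  have pi_mul_one_sub_mem {w : ℝ} (h0 : 0 < w) (h1 : w < 1) : π * (1 - w) ∈ Ioo 0 π :=
    ⟨by nlinarith [pi_pos], by nlinarith [pi_pos]⟩
  have hu' := pi_mul_one_sub_mem hu (huv.trans_lt hv)
  have hv' := pi_mul_one_sub_mem (hu.trans_le huv) hv
  have hcot := strictAntiOn_mul_cot.antitoneOn hv' hu' (by nlinarith [pi_pos])
  rw [neg_one_sub_mul_cot_pi_mul_sub_one_div_pi_eq, neg_one_sub_mul_cot_pi_mul_sub_one_div_pi_eq,
    abs_div, abs_div, abs_of_neg (sub_neg.2 (mul_cot_lt_one hu'.1 hu'.2)),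
    abs_of_neg (sub_neg.2 (mul_cot_lt_one hv'.1 hv'.2))]
  gcongr
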